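/- Let q1, q2, q3 ∈ ℝ³ be the vertices of a nondegenerate triangle σ and let X be an affine map ℝ³ → ℝ³ mapping σ onto a triangle σ' with vertices X(q1), X(q2), X(q3). Then (1/2)|σ| |∇_σ X|²_F ≥ |σ'|, with equality when X is the identity, where |σ| and |σ'| denote the triangle areas and ∇_σ X is the surface gradient of X over the plane of σ. -/

import Mathlib

open Matrix

/-- Euclidean norm of a vector in `Fin 3 → ℝ`. -/
noncomputable def norm3 (v : Fin 3 → ℝ) : ℝ := Real.sqrt (v ⬝ᵥ v)

/-- Area of the triangle with vertices `q1 q2 q3` in ℝ³. -/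
noncomputable def triArea (q1 q2 q3 : Fin 3 → ℝ) : ℝ :=
  (1 / 2) * norm3 (crossProduct (q2 - q1) (q3 - q1))

/-- Squared Frobenius norm of a 3×3 real matrix. -/
noncomputable def frobSq (M : Matrix (Fin 3) (Fin 3) ℝ) : ℝ := (Mᵀ * M).trace

/-!
Write `e = q2 - q1`, `f = q3 - q1`, `w = e ⨯₃ f` and `u = w ⨯₃ e`. Then `e, u, w` is an orthogonal
frame with `|u| = |e| |w|`, and `L (1 - n nᵀ)` kills `w`, so
`|L (1 - n nᵀ)|²_F = |L e|² / |e|² + |L u|² / |u|²`. Since `u ≡ |e|² f` modulo `e`, the image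
area is `|L e ⨯₃ L f| / 2 = |L e ⨯₃ L u| / (2 |e|²) ≤ |w| x y / 2` with `x = |L e| / |e|` and
`y = |L u| / |u|`, and `2 x y ≤ x² + y²` gives the inequality.
For `L = 1` the Frobenius norm of the projection is `tr 1 - |n|² = 2`.
-/

section CommRing

variable {R : Type*} [CommRing R]

theorem trace_transpose_mul_self_mul_one_sub_vecMulVec {m n : Type*} [Fintype m] [Fintype n]
    [DecidableEq n] (L : Matrix m n R) {v : n → R} (hv : v ⬝ᵥ v = 1) :
    ((L * (1 - vecMulVec v v))ᵀ * (L * (1 - vecMulVec v v))).trace =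
      (Lᵀ * L).trace - (L *ᵥ v) ⬝ᵥ (L *ᵥ v) := by
  rw [Matrix.mul_sub, Matrix.mul_one, mul_vecMulVec, transpose_sub, transpose_vecMulVec,
    Matrix.sub_mul, Matrix.mul_sub, Matrix.mul_sub, vecMulVec_mul_vecMulVec, vecMulVec_mul,
    mul_vecMulVec]
  simp only [trace_sub, trace_vecMulVec, dotProduct_smul, hv, smul_eq_mul, mulVec_transpose]
  rw [dotProduct_comm v, ← dotProduct_mulVec]
  ring

/-- The trace of `Lᵀ * L` computed in the orthogonal frame `e`, `(e ⨯₃ f) ⨯₃ e`, `e ⨯₃ f`, whose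
squared lengths are `|e|²`, `|e|² |e ⨯₃ f|²`, `|e ⨯₃ f|²`. -/
theorem trace_transpose_mul_self_cross_frame (L : Matrix (Fin 3) (Fin 3) R) (e f : Fin 3 → R) :
    (e ⬝ᵥ e) * ((e ⨯₃ f) ⬝ᵥ (e ⨯₃ f)) * (Lᵀ * L).trace =
      ((e ⨯₃ f) ⬝ᵥ (e ⨯₃ f)) * ((L *ᵥ e) ⬝ᵥ (L *ᵥ e)) +
        (L *ᵥ (e ⨯₃ f ⨯₃ e)) ⬝ᵥ (L *ᵥ (e ⨯₃ f ⨯₃ e)) +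
        (e ⬝ᵥ e) * ((L *ᵥ (e ⨯₃ f)) ⬝ᵥ (L *ᵥ (e ⨯₃ f))) := by
  simp only [dotProduct, Fin.sum_univ_three, cross_apply, cons_val_zero, cons_val_one, cons_val,
    trace, diag, mul_apply, transpose_apply, mulVec]
  ring

theorem mulVec_cross_mulVec_cross_cross (L : Matrix (Fin 3) (Fin 3) R) (e f : Fin 3 → R) :
    (L *ᵥ e) ⨯₃ (L *ᵥ (e ⨯₃ f ⨯₃ e)) = (e ⬝ᵥ e) • ((L *ᵥ e) ⨯₃ (L *ᵥ f)) := by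
  rw [cross_cross_eq_smul_sub_smul, mulVec_sub, mulVec_smul, mulVec_smul, map_sub,
    map_smul, map_smul, cross_self, smul_zero, sub_zero]

end CommRing

section OrderedRing

variable {R : Type*} [CommRing R] [LinearOrder R] [IsStrictOrderedRing R]

theorem dotProduct_self_nonneg {n : Type*} [Fintype n] (v : n → R) : 0 ≤ v ⬝ᵥ v :=
  Finset.sum_nonneg fun i _ => mul_self_nonneg (v i)

theorem cross_dot_cross_self_le (u v : Fin 3 → R) :
    (u ⨯₃ v) ⬝ᵥ (u ⨯₃ v) ≤ (u ⬝ᵥ u) * (v ⬝ᵥ v) := by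
  rw [cross_dot_cross, dotProduct_comm v u]
  exact sub_le_self _ (mul_self_nonneg _)

end OrderedRing

theorem norm3_sq (v : Fin 3 → ℝ) : norm3 v ^ 2 = v ⬝ᵥ v :=
  Real.sq_sqrt (dotProduct_self_nonneg v)

theorem dotProduct_self_inv_norm3_smul {v : Fin 3 → ℝ} (hv : v ≠ 0) :
    ((norm3 v)⁻¹ • v) ⬝ᵥ ((norm3 v)⁻¹ • v) = 1 := by
  have hpos : 0 < v ⬝ᵥ v := dotProduct_self_star_pos_iff.mpr hv
  rw [dotProduct_smul, smul_dotProduct, smul_eq_mul, smul_eq_mul, ← mul_assoc, ← sq, inv_pow,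
    norm3_sq, inv_mul_cancel₀ hpos.ne']

theorem frobSq_mul_one_sub_vecMulVec_cross (L : Matrix (Fin 3) (Fin 3) ℝ) {e f n : Fin 3 → ℝ}
    (hef : e ⨯₃ f ≠ 0) (hn : n = (norm3 (e ⨯₃ f))⁻¹ • (e ⨯₃ f)) :
    (e ⬝ᵥ e) * ((e ⨯₃ f) ⬝ᵥ (e ⨯₃ f)) * frobSq (L * (1 - vecMulVec n n)) =
      ((e ⨯₃ f) ⬝ᵥ (e ⨯₃ f)) * ((L *ᵥ e) ⬝ᵥ (L *ᵥ e)) +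
        (L *ᵥ (e ⨯₃ f ⨯₃ e)) ⬝ᵥ (L *ᵥ (e ⨯₃ f ⨯₃ e)) := by
  set w := e ⨯₃ f
  have hw : w ⬝ᵥ w ≠ 0 := mt dotProduct_self_eq_zero.mp hef
  have hLn : (L *ᵥ n) ⬝ᵥ (L *ᵥ n) = (w ⬝ᵥ w)⁻¹ * ((L *ᵥ w) ⬝ᵥ (L *ᵥ w)) := by
    rw [hn, mulVec_smul, dotProduct_smul, smul_dotProduct, smul_eq_mul, smul_eq_mul, ← mul_assoc,
      ← sq, inv_pow, norm3_sq]
  rw [frobSq, trace_transpose_mul_self_mul_one_sub_vecMulVec L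
    (hn ▸ dotProduct_self_inv_norm3_smul hef), hLn, mul_sub, trace_transpose_mul_self_cross_frame]
  field_simp
  ring

theorem cross_mulVec_dot_self_le (L : Matrix (Fin 3) (Fin 3) ℝ) (e f : Fin 3 → ℝ) :
    (e ⬝ᵥ e) ^ 2 * (((L *ᵥ e) ⨯₃ (L *ᵥ f)) ⬝ᵥ ((L *ᵥ e) ⨯₃ (L *ᵥ f))) ≤
      ((L *ᵥ e) ⬝ᵥ (L *ᵥ e)) * ((L *ᵥ (e ⨯₃ f ⨯₃ e)) ⬝ᵥ (L *ᵥ (e ⨯₃ f ⨯₃ e))) := by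
  calc (e ⬝ᵥ e) ^ 2 * (((L *ᵥ e) ⨯₃ (L *ᵥ f)) ⬝ᵥ ((L *ᵥ e) ⨯₃ (L *ᵥ f)))
      = ((L *ᵥ e) ⨯₃ (L *ᵥ (e ⨯₃ f ⨯₃ e))) ⬝ᵥ ((L *ᵥ e) ⨯₃ (L *ᵥ (e ⨯₃ f ⨯₃ e))) := by
        rw [mulVec_cross_mulVec_cross_cross, dotProduct_smul, smul_dotProduct, smul_eq_mul,
          smul_eq_mul, ← mul_assoc, sq]
    _ ≤ _ := cross_dot_cross_self_le _ _

theorem norm3_mulVec_cross_mulVec_le (L : Matrix (Fin 3) (Fin 3) ℝ) {e f n : Fin 3 → ℝ}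
    (hef : e ⨯₃ f ≠ 0) (hn : n = (norm3 (e ⨯₃ f))⁻¹ • (e ⨯₃ f)) :
    norm3 ((L *ᵥ e) ⨯₃ (L *ᵥ f)) ≤ 1 / 2 * norm3 (e ⨯₃ f) * frobSq (L * (1 - vecMulVec n n)) := by
  have hc : 0 < e ⬝ᵥ e := dotProduct_self_star_pos_iff.mpr (by rintro rfl; simp at hef)
  have ht : 0 < (e ⨯₃ f) ⬝ᵥ (e ⨯₃ f) := dotProduct_self_star_pos_iff.mpr hef
  have hF := frobSq_mul_one_sub_vecMulVec_cross L hef hn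
  have hG := cross_mulVec_dot_self_le L e f
  set c := e ⬝ᵥ e
  set t := (e ⨯₃ f) ⬝ᵥ (e ⨯₃ f)
  set F := frobSq (L * (1 - vecMulVec n n))
  set a := (L *ᵥ e) ⬝ᵥ (L *ᵥ e)
  set β := (L *ᵥ (e ⨯₃ f ⨯₃ e)) ⬝ᵥ (L *ᵥ (e ⨯₃ f ⨯₃ e))
  set G := ((L *ᵥ e) ⨯₃ (L *ᵥ f)) ⬝ᵥ ((L *ᵥ e) ⨯₃ (L *ᵥ f))
  have hF_nonneg : 0 ≤ F := by
    have : 0 ≤ c * t * F :=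
      hF ▸ add_nonneg (mul_nonneg ht.le (dotProduct_self_nonneg _)) (dotProduct_self_nonneg _)
    exact nonneg_of_mul_nonneg_right this (mul_pos hc ht)
  rw [norm3, Real.sqrt_le_left (by unfold norm3; positivity), mul_pow, mul_pow, norm3_sq]
  have key : c ^ 2 * t * (4 * G) ≤ c ^ 2 * t * (t * F ^ 2) := calc
    c ^ 2 * t * (4 * G) ≤ 4 * t * (a * β) := by nlinarith
    _ ≤ (t * a + β) ^ 2 := by nlinarith [sq_nonneg (t * a - β)]
    _ = c ^ 2 * t * (t * F ^ 2) := by rw [← hF]; ring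
  nlinarith [le_of_mul_le_mul_left key (by positivity)]

theorem frobSq_one_sub_vecMulVec {n : Fin 3 → ℝ} (hn : n ⬝ᵥ n = 1) :
    frobSq (1 - vecMulVec n n) = 2 := by
  have h := trace_transpose_mul_self_mul_one_sub_vecMulVec (1 : Matrix (Fin 3) (Fin 3) ℝ) hn
  rw [Matrix.one_mul, transpose_one, Matrix.one_mul, trace_one, one_mulVec, hn] at h
  rw [frobSq, h]
  norm_num

theorem triArea_mulVec_add (L : Matrix (Fin 3) (Fin 3) ℝ) (b q1 q2 q3 : Fin 3 → ℝ) :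
    triArea (L *ᵥ q1 + b) (L *ᵥ q2 + b) (L *ᵥ q3 + b) =
      1 / 2 * norm3 ((L *ᵥ (q2 - q1)) ⨯₃ (L *ᵥ (q3 - q1))) := by
  simp only [triArea, add_sub_add_right_eq_sub, mulVec_sub]

theorem stmt_8 (q1 q2 q3 : Fin 3 → ℝ)
    (hnd : crossProduct (q2 - q1) (q3 - q1) ≠ 0)
    (L : Matrix (Fin 3) (Fin 3) ℝ) (b : Fin 3 → ℝ)
    (X : (Fin 3 → ℝ) → (Fin 3 → ℝ)) (hX : ∀ q, X q = L.mulVec q + b)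
    (n : Fin 3 → ℝ) (hn : n = (norm3 (crossProduct (q2 - q1) (q3 - q1)))⁻¹ •
      crossProduct (q2 - q1) (q3 - q1))
    (P : Matrix (Fin 3) (Fin 3) ℝ) (hP : P = 1 - vecMulVec n n) :
    (1 / 2) * triArea q1 q2 q3 * frobSq (L * P) ≥ triArea (X q1) (X q2) (X q3) ∧
    (L = 1 → (1 / 2) * triArea q1 q2 q3 * frobSq (L * P) = triArea (X q1) (X q2) (X q3)) := by
  have hXarea : triArea (X q1) (X q2) (X q3) =
      1 / 2 * norm3 ((L *ᵥ (q2 - q1)) ⨯₃ (L *ᵥ (q3 - q1))) := by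
    simp only [hX, triArea_mulVec_add]
  subst hP
  refine ⟨?_, fun hL => ?_⟩
  · have := norm3_mulVec_cross_mulVec_le L hnd hn
    rw [ge_iff_le, hXarea, triArea]
    linarith
  · subst hL
    rw [hXarea, Matrix.one_mul, frobSq_one_sub_vecMulVec (hn ▸ dotProduct_self_inv_norm3_smul hnd),
      one_mulVec, one_mulVec, triArea]
    ring
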